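/- Let P, Q be positive definite real symmetric n×n matrices. Then tr[P·(log P − log Q) − P + Q] ≥ 0, with equality if and only if P = Q. -/

import Mathlib

/-!
Diagonalize `P = U diag(p) Uᵀ` and `Q = V diag(q) Vᵀ` with `U`, `V` orthogonal, and put `M = UᵀV`.
Writing each of the four terms as a trace `tr(U diag(a) Uᵀ · V diag(b) Vᵀ) = ∑ᵢⱼ Mᵢⱼ² aᵢ bⱼ`, the
trace becomes `∑ᵢⱼ Mᵢⱼ² (pᵢ (log pᵢ - log qⱼ) - pᵢ + qⱼ)`. Each bracket is nonnegative by
`log t ≤ t - 1`, with equality only when `pᵢ = qⱼ`. Hence a vanishing trace forces `pᵢ = qⱼ`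
whenever `Mᵢⱼ ≠ 0`, i.e. `diag(p) M = M diag(q)`, which unfolds to `P = Q`.
-/

open Filter Topology Matrix

/-- Matrix power of a Hermitian (symmetric) real matrix via spectral decomposition. -/
noncomputable def mpow {m : ℕ} (A : Matrix (Fin m) (Fin m) ℝ) (c : ℝ) :
    Matrix (Fin m) (Fin m) ℝ :=
  if hA : A.IsHermitian then
    (hA.eigenvectorUnitary : Matrix (Fin m) (Fin m) ℝ) *
      Matrix.diagonal (fun i => hA.eigenvalues i ^ c) *
      star (hA.eigenvectorUnitary : Matrix (Fin m) (Fin m) ℝ)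
  else 0

/-- Matrix logarithm of a Hermitian (symmetric) real matrix via spectral decomposition. -/
noncomputable def mlog {m : ℕ} (A : Matrix (Fin m) (Fin m) ℝ) :
    Matrix (Fin m) (Fin m) ℝ :=
  if hA : A.IsHermitian then
    (hA.eigenvectorUnitary : Matrix (Fin m) (Fin m) ℝ) *
      Matrix.diagonal (fun i => Real.log (hA.eigenvalues i)) *
      star (hA.eigenvectorUnitary : Matrix (Fin m) (Fin m) ℝ)
  else 0

namespace Real

lemma mul_log_sub_log_sub_add_pos {x y : ℝ} (hx : 0 < x) (hy : 0 < y) (hxy : x ≠ y) :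
    0 < x * (log x - log y) - x + y := by
  have hlt : log (y / x) < y / x - 1 :=
    log_lt_sub_one_of_pos (div_pos hy hx) (by rwa [ne_eq, div_eq_one_iff_eq hx.ne', eq_comm])
  have hrewrite : x * (log x - log y) - x + y = x * (y / x - 1 - log (y / x)) := by
    rw [log_div hy.ne' hx.ne']
    field_simp
    ring
  rw [hrewrite]
  exact mul_pos hx (sub_pos.mpr hlt)

lemma mul_log_sub_log_sub_add_nonneg {x y : ℝ} (hx : 0 < x) (hy : 0 < y) :
    0 ≤ x * (log x - log y) - x + y := by
  rcases eq_or_ne x y with rfl | hxy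
  · simp
  · exact (mul_log_sub_log_sub_add_pos hx hy hxy).le

end Real

namespace Matrix

variable {ι R : Type*} [Fintype ι] [DecidableEq ι]

lemma trace_conj_diagonal_mul_conj_diagonal (U V : Matrix ι ι ℝ) (d e : ι → ℝ) :
    (U * diagonal d * star U * (V * diagonal e * star V)).trace =
      ∑ i, ∑ j, (star U * V) i j ^ 2 * (d i * e j) := by
  set M := star U * V
  have hcycle :
      diagonal d * M * diagonal e * star V * U = diagonal d * M * diagonal e * star M := by
    simp only [M, star_mul, star_star, mul_assoc]
  calc (U * diagonal d * star U * (V * diagonal e * star V)).trace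
      = (U * (diagonal d * M * diagonal e * star V)).trace := by simp only [M, mul_assoc]
    _ = (diagonal d * M * diagonal e * star M).trace := by rw [trace_mul_comm, hcycle]
    _ = ∑ i, ∑ j, M i j ^ 2 * (d i * e j) := by
      simp only [trace, diag_apply, mul_apply, diagonal_apply, star_apply, star_trivial,
        ite_mul, mul_ite, zero_mul, mul_zero, Finset.sum_ite_eq, Finset.sum_ite_eq',
        Finset.mem_univ, if_true]
      exact Finset.sum_congr rfl fun i _ => Finset.sum_congr rfl fun j _ => by ring

lemma conj_diagonal_mul_conj_diagonal_self [CommRing R] [StarRing R] {U : Matrix ι ι R}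
    (hU : U ∈ unitaryGroup ι R) (d e : ι → R) :
    U * diagonal d * star U * (U * diagonal e * star U) = U * diagonal (d * e) * star U :=
  calc U * diagonal d * star U * (U * diagonal e * star U)
      = U * diagonal d * (star U * U) * diagonal e * star U := by simp only [mul_assoc]
    _ = U * diagonal (d * e) * star U := by
      rw [mem_unitaryGroup_iff'.mp hU, mul_one, mul_assoc U, diagonal_mul_diagonal]
      rfl

lemma conj_diagonal_eq_of_diagonal_mul_eq [CommRing R] [StarRing R] {U V : Matrix ι ι R}
    (hU : U ∈ unitaryGroup ι R) (hV : V ∈ unitaryGroup ι R) {d e : ι → R}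
    (h : diagonal d * (star U * V) = star U * V * diagonal e) :
    U * diagonal d * star U = V * diagonal e * star V :=
  calc U * diagonal d * star U = U * (diagonal d * (star U * V)) * star V := by
        simp only [mul_assoc, mem_unitaryGroup_iff.mp hV, mul_one]
    _ = U * (star U * V * diagonal e) * star V := by rw [h]
    _ = V * diagonal e * star V := by
        simp only [← mul_assoc, mem_unitaryGroup_iff.mp hU, one_mul]

lemma diagonal_mul_eq_mul_diagonal [CommSemiring R] {M : Matrix ι ι R} {d e : ι → R}
    (h : ∀ i j, M i j ≠ 0 → d i = e j) : diagonal d * M = M * diagonal e := by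
  ext i j
  rw [diagonal_mul, mul_diagonal]
  rcases eq_or_ne (M i j) 0 with hij | hij
  · simp [hij]
  · rw [h i j hij, mul_comm]

lemma trace_conj_diagonal_mul_sub_sub_add_eq_sum {U V : Matrix ι ι ℝ}
    (hU : U ∈ unitaryGroup ι ℝ) (hV : V ∈ unitaryGroup ι ℝ) (p q a b : ι → ℝ) :
    (U * diagonal p * star U * (U * diagonal a * star U - V * diagonal b * star V) -
        U * diagonal p * star U + V * diagonal q * star V).trace =
      ∑ i, ∑ j, (star U * V) i j ^ 2 * (p i * (a i - b j) - p i + q j) := by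
  have hUone : U * diagonal (fun _ => 1) * star U = 1 := by
    rw [diagonal_one, mul_one, mem_unitaryGroup_iff.mp hU]
  have hVone : V * diagonal (fun _ => 1) * star V = 1 := by
    rw [diagonal_one, mul_one, mem_unitaryGroup_iff.mp hV]
  have hpa : (U * diagonal p * star U * (U * diagonal a * star U)).trace =
      ∑ i, ∑ j, (star U * V) i j ^ 2 * (p i * a i * 1) := by
    rw [conj_diagonal_mul_conj_diagonal_self hU, ← mul_one (U * _ * _), ← hVone,
      trace_conj_diagonal_mul_conj_diagonal]
    rfl
  have hp : (U * diagonal p * star U).trace = ∑ i, ∑ j, (star U * V) i j ^ 2 * (p i * 1) := by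
    rw [← mul_one (U * _ * _), ← hVone, trace_conj_diagonal_mul_conj_diagonal]
  have hq : (V * diagonal q * star V).trace = ∑ i, ∑ j, (star U * V) i j ^ 2 * (1 * q j) := by
    rw [← one_mul (V * _ * _), ← hUone, trace_conj_diagonal_mul_conj_diagonal]
  rw [mul_sub, trace_add, trace_sub, trace_sub, hpa, trace_conj_diagonal_mul_conj_diagonal, hp, hq]
  simp only [← Finset.sum_sub_distrib, ← Finset.sum_add_distrib]
  exact Finset.sum_congr rfl fun i _ => Finset.sum_congr rfl fun j _ => by ring

lemma IsHermitian.eq_conj_diagonal_eigenvalues {A : Matrix ι ι ℝ} (hA : A.IsHermitian) :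
    A = (hA.eigenvectorUnitary : Matrix ι ι ℝ) * diagonal hA.eigenvalues *
      star (hA.eigenvectorUnitary : Matrix ι ι ℝ) := by
  conv_lhs => rw [hA.spectral_theorem]
  simp [Unitary.conjStarAlgAut_apply]

end Matrix

lemma mlog_of_isHermitian {n : ℕ} {A : Matrix (Fin n) (Fin n) ℝ} (hA : A.IsHermitian) :
    mlog A = (hA.eigenvectorUnitary : Matrix (Fin n) (Fin n) ℝ) *
      diagonal (fun i => Real.log (hA.eigenvalues i)) *
      star (hA.eigenvectorUnitary : Matrix (Fin n) (Fin n) ℝ) :=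
  dif_pos hA

lemma trace_mul_mlog_sub_mlog_sub_add_eq_sum {n : ℕ} {P Q : Matrix (Fin n) (Fin n) ℝ}
    (hP : P.IsHermitian) (hQ : Q.IsHermitian) :
    (P * (mlog P - mlog Q) - P + Q).trace =
      ∑ i, ∑ j, (star (hP.eigenvectorUnitary : Matrix (Fin n) (Fin n) ℝ) *
          hQ.eigenvectorUnitary) i j ^ 2 *
        (hP.eigenvalues i * (Real.log (hP.eigenvalues i) - Real.log (hQ.eigenvalues j)) -
          hP.eigenvalues i + hQ.eigenvalues j) := by
  have key := trace_conj_diagonal_mul_sub_sub_add_eq_sum hP.eigenvectorUnitary.2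
    hQ.eigenvectorUnitary.2 hP.eigenvalues hQ.eigenvalues (fun i => Real.log (hP.eigenvalues i))
    (fun j => Real.log (hQ.eigenvalues j))
  rwa [← mlog_of_isHermitian hP, ← mlog_of_isHermitian hQ, ← hP.eq_conj_diagonal_eigenvalues,
    ← hQ.eq_conj_diagonal_eigenvalues] at key

theorem vonNeumann_relative_entropy_nonneg {n : ℕ}
    (P Q : Matrix (Fin n) (Fin n) ℝ) (hP : P.PosDef) (hQ : Q.PosDef) :
    0 ≤ (P * (mlog P - mlog Q) - P + Q).trace ∧
      ((P * (mlog P - mlog Q) - P + Q).trace = 0 ↔ P = Q) := by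
  set M := star (hP.isHermitian.eigenvectorUnitary : Matrix (Fin n) (Fin n) ℝ) *
    hQ.isHermitian.eigenvectorUnitary
  set p := hP.isHermitian.eigenvalues
  set q := hQ.isHermitian.eigenvalues
  have hterm_nonneg (i j : Fin n) :
      0 ≤ M i j ^ 2 * (p i * (Real.log (p i) - Real.log (q j)) - p i + q j) :=
    mul_nonneg (sq_nonneg _)
      (Real.mul_log_sub_log_sub_add_nonneg (hP.eigenvalues_pos i) (hQ.eigenvalues_pos j))
  have hsum_nonneg (i : Fin n) := Finset.sum_nonneg fun j (_ : j ∈ Finset.univ) => hterm_nonneg i j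
  have htrace := trace_mul_mlog_sub_mlog_sub_add_eq_sum hP.isHermitian hQ.isHermitian
  refine ⟨htrace ▸ Finset.sum_nonneg fun i _ => hsum_nonneg i, fun h => ?_, by rintro rfl; simp⟩
  rw [htrace, Finset.sum_eq_zero_iff_of_nonneg fun i _ => hsum_nonneg i] at h
  have hcomm : diagonal p * M = M * diagonal q := by
    refine diagonal_mul_eq_mul_diagonal fun i j hij => ?_
    by_contra hne
    have hpos := mul_pos (sq_pos_of_ne_zero hij)
      (Real.mul_log_sub_log_sub_add_pos (hP.eigenvalues_pos i) (hQ.eigenvalues_pos j) hne)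
    exact hpos.ne' ((Finset.sum_eq_zero_iff_of_nonneg fun j _ => hterm_nonneg i j).mp
      (h i (Finset.mem_univ _)) j (Finset.mem_univ _))
  rw [hP.isHermitian.eq_conj_diagonal_eigenvalues, hQ.isHermitian.eq_conj_diagonal_eigenvalues]
  exact conj_diagonal_eq_of_diagonal_mul_eq hP.isHermitian.eigenvectorUnitary.2
    hQ.isHermitian.eigenvectorUnitary.2 hcomm
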